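/- arXiv:2204.05615 — 5 statements merged into one kernel-verified Lean document; each statement's English description precedes it below -/
import Mathlib

section
/- (Normalized power prior for the normal linear model, part b) Under the linear model Y = Xβ + ε with ε ~ N(0, σ²Iₙ), historical data Y₀ = X₀β + ε₀ with ε₀ ~ N(0, σ²I_{n₀}), initial prior π₀(β,σ²) ∝ σ^{−2a}·exp{−b(β−μ₀)ᵀR(β−μ₀)/(2σ²)}/(σ²)^{kb/2} with b ∈ {0,1}, and prior π₀(δ), the marginal posterior of δ satisfies π(δ|D₀,D) ∝ π₀(δ)|bR+δX₀ᵀX₀|^{1/2} Γ((n+δn₀+(b−1)k)/2 + a − 1) / [|bR+δX₀ᵀX₀+XᵀX|^{1/2} Γ((δn₀+(b−1)k)/2 + a − 1) M(δ)], where M(δ) = [δ(S₀+bH₀(δ)) + S + H(δ)]^{n/2} [1 + (S+H(δ))/(δ(S₀+bH₀(δ)))]^{(δn₀+(b−1)k)/2+a−1}. -/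
open Matrix MeasureTheory Real Set

namespace NPPAux

variable {k n : ℕ}

lemma dot_swap (M : Matrix (Fin k) (Fin k) ℝ) (hM : Mᵀ = M) (x y : Fin k → ℝ) :
    x ⬝ᵥ M *ᵥ y = y ⬝ᵥ M *ᵥ x := by
  rw [dotProduct_mulVec, ← vecMul_transpose, hM, dotProduct_comm]

/-- completing the square: combining two quadratics. -/
lemma quad_combine (P Q : Matrix (Fin k) (Fin k) ℝ) (hP : Pᵀ = P) (hQ : Qᵀ = Q)
    (hdet : IsUnit (P + Q).det) (u v β : Fin k → ℝ) :
    (β - u) ⬝ᵥ P *ᵥ (β - u) + (β - v) ⬝ᵥ Q *ᵥ (β - v)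
      = (β - (P + Q)⁻¹ *ᵥ (P *ᵥ u + Q *ᵥ v)) ⬝ᵥ (P + Q) *ᵥ
          (β - (P + Q)⁻¹ *ᵥ (P *ᵥ u + Q *ᵥ v))
        + (u - v) ⬝ᵥ Q *ᵥ ((P + Q)⁻¹ *ᵥ (P *ᵥ (u - v))) := by
  have hTT' : ∀ x : Fin k → ℝ, (P + Q)⁻¹ *ᵥ ((P + Q) *ᵥ x) = x := by
    intro x; rw [Matrix.mulVec_mulVec, Matrix.nonsing_inv_mul _ hdet, Matrix.one_mulVec]
  obtain ⟨s, rfl⟩ : ∃ s, u = v + s := ⟨u - v, by abel⟩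
  have hs : v + s - v = s := by abel
  rw [hs]
  set w : Fin k → ℝ := (P + Q)⁻¹ *ᵥ (P *ᵥ s) with hw
  have hcon : (P + Q) *ᵥ w = P *ᵥ s := by
    rw [hw, Matrix.mulVec_mulVec, Matrix.mul_nonsing_inv _ hdet, Matrix.one_mulVec]
  have hm : (P + Q)⁻¹ *ᵥ (P *ᵥ (v + s) + Q *ᵥ v) = v + w := by
    have : P *ᵥ (v + s) + Q *ᵥ v = (P + Q) *ᵥ (v + w) := by
      rw [Matrix.mulVec_add, Matrix.mulVec_add, hcon, Matrix.add_mulVec]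
      abel
    rw [this, hTT']
  rw [hm]
  have hQw : ∀ x : Fin k → ℝ, x ⬝ᵥ Q *ᵥ w = x ⬝ᵥ P *ᵥ s - x ⬝ᵥ P *ᵥ w := by
    intro x
    have : Q *ᵥ w = P *ᵥ s - P *ᵥ w := by
      rw [← hcon, Matrix.add_mulVec]; abel
    rw [this, dotProduct_sub]
  clear_value w
  clear hw hcon hm hTT'
  simp only [Matrix.add_mulVec, Matrix.mulVec_add, Matrix.mulVec_sub, Matrix.sub_mulVec,
    dotProduct_add, dotProduct_sub, add_dotProduct, sub_dotProduct]
  simp only [dot_swap P hP v β, dot_swap P hP s β, dot_swap P hP w β,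
    dot_swap P hP s v, dot_swap P hP w v, dot_swap P hP w s,
    dot_swap Q hQ v β, dot_swap Q hQ s β, dot_swap Q hQ w β,
    dot_swap Q hQ s v, dot_swap Q hQ w v, dot_swap Q hQ w s,
    hQw]
  ring

lemma dot_self_nonneg (x : Fin k → ℝ) : 0 ≤ x ⬝ᵥ x :=
  Finset.sum_nonneg fun _ _ => mul_self_nonneg _

lemma psd_nonneg {M : Matrix (Fin k) (Fin k) ℝ} (hM : M.PosSemidef) (x : Fin k → ℝ) :
    0 ≤ x ⬝ᵥ M *ᵥ x := by simpa using hM.dotProduct_mulVec_nonneg x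

lemma dot_XtX (X : Matrix (Fin n) (Fin k) ℝ) (c : Fin k → ℝ) :
    (X *ᵥ c) ⬝ᵥ (X *ᵥ c) = c ⬝ᵥ (Xᵀ * X) *ᵥ c := by
  rw [dotProduct_mulVec, ← Matrix.mulVec_transpose, Matrix.mulVec_mulVec, dotProduct_comm]

/-- residual decomposition -/
lemma resid (X : Matrix (Fin n) (Fin k) ℝ) (hG : IsUnit (Xᵀ * X).det)
    (Y : Fin n → ℝ) (β : Fin k → ℝ) :
    (Y - X *ᵥ β) ⬝ᵥ (Y - X *ᵥ β)
      = (Y - X *ᵥ ((Xᵀ * X)⁻¹ *ᵥ (Xᵀ *ᵥ Y))) ⬝ᵥ (Y - X *ᵥ ((Xᵀ * X)⁻¹ *ᵥ (Xᵀ *ᵥ Y)))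
        + (β - (Xᵀ * X)⁻¹ *ᵥ (Xᵀ *ᵥ Y)) ⬝ᵥ (Xᵀ * X) *ᵥ (β - (Xᵀ * X)⁻¹ *ᵥ (Xᵀ *ᵥ Y)) := by
  set b := (Xᵀ * X)⁻¹ *ᵥ (Xᵀ *ᵥ Y) with hb
  have horth : Xᵀ *ᵥ (Y - X *ᵥ b) = 0 := by
    rw [Matrix.mulVec_sub, hb, Matrix.mulVec_mulVec, Matrix.mulVec_mulVec,
      Matrix.mul_nonsing_inv _ hG, Matrix.one_mulVec, sub_self]
  have hsplit : Y - X *ᵥ β = (Y - X *ᵥ b) + X *ᵥ (b - β) := by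
    rw [Matrix.mulVec_sub]; abel
  rw [hsplit]
  have hcross : (X *ᵥ (b - β)) ⬝ᵥ (Y - X *ᵥ b) = 0 := by
    rw [dotProduct_comm, dotProduct_mulVec, ← Matrix.mulVec_transpose, horth,
      zero_dotProduct]
  have hcross' : (Y - X *ᵥ b) ⬝ᵥ (X *ᵥ (b - β)) = 0 := by
    rw [dotProduct_comm] at hcross; exact hcross
  have hquad : (X *ᵥ (b - β)) ⬝ᵥ (X *ᵥ (b - β))
      = (β - b) ⬝ᵥ (Xᵀ * X) *ᵥ (β - b) := by
    rw [dot_XtX, show b - β = -(β - b) by abel, Matrix.mulVec_neg, dotProduct_neg,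
      neg_dotProduct, neg_neg]
  rw [dotProduct_add, add_dotProduct, add_dotProduct, hcross, hcross', hquad]
  ring

lemma posdef_smul {M : Matrix (Fin k) (Fin k) ℝ} (hM : M.PosDef) {c : ℝ} (hc : 0 < c) :
    (c • M).PosDef := by
  refine Matrix.PosDef.of_dotProduct_mulVec_pos ?_ fun x hx => ?_
  · unfold Matrix.IsHermitian
    rw [Matrix.conjTranspose_smul, hM.1.eq]; simp
  · rw [Matrix.smul_mulVec, dotProduct_smul, smul_eq_mul]
    exact mul_pos hc (hM.dotProduct_mulVec_pos hx)

lemma possemidef_smul {M : Matrix (Fin k) (Fin k) ℝ} (hM : M.PosSemidef) {c : ℝ} (hc : 0 ≤ c) :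
    (c • M).PosSemidef := by
  refine Matrix.PosSemidef.of_dotProduct_mulVec_nonneg ?_ fun x => ?_
  · unfold Matrix.IsHermitian
    rw [Matrix.conjTranspose_smul, hM.1.eq]; simp
  · rw [Matrix.smul_mulVec, dotProduct_smul, smul_eq_mul]
    exact mul_nonneg hc (hM.dotProduct_mulVec_nonneg x)

lemma posdef_transpose_eq {M : Matrix (Fin k) (Fin k) ℝ} (hM : M.IsHermitian) : Mᵀ = M := by
  have := hM.eq
  rwa [Matrix.conjTranspose_eq_transpose_of_trivial] at this

lemma gauss_core {B : Matrix (Fin k) (Fin k) ℝ} (hB : B.PosDef) :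
    ∫ β : Fin k → ℝ, Real.exp (-(β ⬝ᵥ B *ᵥ β)) = π ^ ((k : ℝ) / 2) / Real.sqrt B.det := by
  classical
  open scoped MatrixOrder in
  obtain ⟨C, hCsa, -, hCsq⟩ := CFC.exists_sqrt_of_isSelfAdjoint_of_quasispectrumRestricts
    (a := B) hB.posSemidef.isHermitian
    (QuasispectrumRestricts.nnreal_of_nonneg hB.posSemidef.nonneg)
  have hCt : Cᵀ = C := by
    have := hCsa.star_eq
    rwa [Matrix.star_eq_conjTranspose, Matrix.conjTranspose_eq_transpose_of_trivial] at this
  have hdetB : 0 < B.det := hB.det_pos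
  have hdetCsq : C.det * C.det = B.det := by rw [← Matrix.det_mul, hCsq]
  have hdetC : C.det ≠ 0 := by
    intro h
    apply hdetB.ne'
    rw [← hdetCsq, h, zero_mul]
  have habs : |C.det| = Real.sqrt B.det := by
    rw [← Real.sqrt_sq_eq_abs, sq, hdetCsq]
  have hbase : ∫ x : Fin k → ℝ, Real.exp (-(x ⬝ᵥ x)) = π ^ ((k : ℝ) / 2) := by
    have h1 : ∀ x : Fin k → ℝ, Real.exp (-(x ⬝ᵥ x)) = ∏ i, Real.exp (-(x i) ^ 2) := by
      intro x
      rw [← Real.exp_sum]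
      congr 1
      simp [dotProduct, Finset.sum_neg_distrib]
      congr 1
      ext i
      ring
    simp_rw [h1]
    rw [MeasureTheory.integral_fintype_prod_volume_eq_pow (ι := Fin k) (fun t => Real.exp (-t ^ 2))]
    have : ∫ t : ℝ, Real.exp (-t ^ 2) = Real.sqrt π := by
      have := integral_gaussian 1
      simpa using this
    rw [this, Fintype.card_fin]
    rw [← Real.rpow_natCast (Real.sqrt π) k, Real.sqrt_eq_rpow, ← Real.rpow_mul pi_pos.le]
    ring_nf
  have hmap := Real.map_matrix_volume_pi_eq_smul_volume_pi (ι := Fin k) hdetC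
  have hint : ∫ x : Fin k → ℝ, Real.exp (-(x ⬝ᵥ x)) ∂(Measure.map (Matrix.toLin' C) volume)
      = ∫ β : Fin k → ℝ, Real.exp (-(β ⬝ᵥ B *ᵥ β)) := by
    rw [MeasureTheory.integral_map]
    · congr 1
      ext β
      rw [Matrix.toLin'_apply]
      congr 2
      rw [dot_XtX, hCt, hCsq]
    · exact (Matrix.toLin' C).continuous_of_finiteDimensional.aemeasurable
    · exact (Continuous.aestronglyMeasurable (Real.continuous_exp.comp (continuous_id.dotProduct continuous_id).neg))
  rw [hmap] at hint
  rw [MeasureTheory.integral_smul_measure] at hint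
  rw [ENNReal.toReal_ofReal (by positivity)] at hint
  rw [hbase] at hint
  rw [← hint, abs_inv, habs, smul_eq_mul, inv_mul_eq_div]

lemma gauss_full {T : Matrix (Fin k) (Fin k) ℝ} (hT : T.PosDef) {s : ℝ} (hs : 0 < s)
    (m : Fin k → ℝ) :
    ∫ β : Fin k → ℝ, Real.exp (-((β - m) ⬝ᵥ T *ᵥ (β - m)) / (2 * s))
      = (2 * π * s) ^ ((k : ℝ) / 2) / Real.sqrt T.det := by
  have h2s : (0:ℝ) < 2 * s := by positivity
  have htrans := MeasureTheory.integral_sub_right_eq_self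
    (μ := (volume : Measure (Fin k → ℝ)))
    (fun β : Fin k → ℝ => Real.exp (-(β ⬝ᵥ T *ᵥ β) / (2 * s))) m
  have hBpd : ((2 * s)⁻¹ • T).PosDef := posdef_smul hT (by positivity)
  have hpt : ∀ β : Fin k → ℝ, Real.exp (-(β ⬝ᵥ T *ᵥ β) / (2 * s))
      = Real.exp (-(β ⬝ᵥ ((2 * s)⁻¹ • T) *ᵥ β)) := by
    intro β
    congr 1
    rw [Matrix.smul_mulVec, dotProduct_smul, smul_eq_mul]
    field_simp
  calc ∫ β : Fin k → ℝ, Real.exp (-((β - m) ⬝ᵥ T *ᵥ (β - m)) / (2 * s))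
      = ∫ β : Fin k → ℝ, Real.exp (-(β ⬝ᵥ T *ᵥ β) / (2 * s)) := htrans
    _ = ∫ β : Fin k → ℝ, Real.exp (-(β ⬝ᵥ ((2 * s)⁻¹ • T) *ᵥ β)) := by simp_rw [hpt]
    _ = π ^ ((k : ℝ) / 2) / Real.sqrt ((2 * s)⁻¹ • T).det := gauss_core hBpd
    _ = (2 * π * s) ^ ((k : ℝ) / 2) / Real.sqrt T.det := by
        rw [Matrix.det_smul, Fintype.card_fin]
        rw [Real.sqrt_mul (by positivity)]
        have h1 : Real.sqrt ((2 * s)⁻¹ ^ k) = ((2 * s)⁻¹) ^ ((k : ℝ) / 2) := by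
          rw [Real.sqrt_eq_rpow, ← Real.rpow_natCast ((2*s)⁻¹) k,
            ← Real.rpow_mul (by positivity)]
          ring_nf
        rw [h1, Real.inv_rpow h2s.le]
        have h2 : (2 * π * s) ^ ((k : ℝ) / 2) = (2 * s) ^ ((k : ℝ) / 2) * π ^ ((k : ℝ) / 2) := by
          rw [← Real.mul_rpow h2s.le pi_pos.le]
          ring_nf
        rw [h2, mul_comm (((2*s) ^ ((k:ℝ)/2))⁻¹) (Real.sqrt T.det), ← div_div,
          div_inv_eq_mul, mul_comm (π ^ ((k:ℝ)/2) / Real.sqrt T.det) ((2*s) ^ ((k:ℝ)/2)),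
          mul_div_assoc]

/-- inverse gamma integral, valid also at q = 0 (both sides are 0). -/
lemma inv_gamma_integral {p q : ℝ} (hp : 1 < p) (hq : 0 ≤ q) :
    ∫ s in Ioi (0:ℝ), s ^ (-p) * Real.exp (-q / s)
      = Real.Gamma (p - 1) * q ^ (1 - p) := by
  rcases eq_or_lt_of_le hq with hq0 | hqpos
  · have h0 : ∀ s ∈ Ioi (0:ℝ), s ^ (-p) * Real.exp (-q / s) = s ^ (-p) := by
      intro s _
      rw [← hq0, neg_zero, zero_div, Real.exp_zero, mul_one]
    rw [setIntegral_congr_fun measurableSet_Ioi h0]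
    have hni : ¬ IntegrableOn (fun s : ℝ => s ^ (-p)) (Ioi 0) := by
      intro h
      have h2 : IntegrableOn (fun s : ℝ => s ^ (-p)) (Ioo 0 1) :=
        h.mono_set Ioo_subset_Ioi_self
      rw [intervalIntegral.integrableOn_Ioo_rpow_iff zero_lt_one] at h2
      linarith
    rw [MeasureTheory.integral_undef hni, ← hq0, Real.zero_rpow (by linarith), mul_zero]
  · have key := MeasureTheory.integral_comp_rpow_Ioi
      (fun y : ℝ => y ^ (p - 2) * Real.exp (-(q * y))) (p := -1) (by norm_num)
    have hL : (∫ x in Ioi (0:ℝ), (|(-1:ℝ)| * x ^ ((-1:ℝ) - 1)) •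
        ((x ^ (-1:ℝ)) ^ (p - 2) * Real.exp (-(q * x ^ (-1:ℝ)))))
        = ∫ x in Ioi (0:ℝ), x ^ (-p) * Real.exp (-q / x) := by
      apply setIntegral_congr_fun measurableSet_Ioi
      intro x hx
      dsimp only
      have hx0 : (0:ℝ) < x := hx
      have h2 : (x ^ (-1:ℝ)) ^ (p - 2) = x ^ (-(p - 2)) := by
        rw [← Real.rpow_mul hx0.le]; norm_num
      have h3 : -(q * x ^ (-1:ℝ)) = -q / x := by
        rw [Real.rpow_neg_one]; field_simp
      rw [h2, h3, abs_neg, abs_one, one_mul, smul_eq_mul, ← mul_assoc,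
        ← Real.rpow_add hx0]
      norm_num
      congr 1
      ring
    rw [hL] at key
    rw [key]
    have hR : (∫ y in Ioi (0:ℝ), y ^ (p - 2) * Real.exp (-(q * y)))
        = (1 / q) ^ (p - 1) * Real.Gamma (p - 1) := by
      have := Real.integral_rpow_mul_exp_neg_mul_Ioi (a := p - 1) (r := q)
        (by linarith) hqpos
      rw [← this]
      apply setIntegral_congr_fun measurableSet_Ioi
      intro y _
      dsimp only
      congr 2
      ring
    rw [hR, one_div, Real.inv_rpow hq, ← Real.rpow_neg hq]
    rw [show -(p-1) = 1 - p by ring, mul_comm]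

lemma inner_value {T : Matrix (Fin k) (Fin k) ℝ} (hT : T.PosDef) (m : Fin k → ℝ)
    {s : ℝ} (hs : 0 < s) (c K : ℝ) :
    ∫ β : Fin k → ℝ, c * Real.exp (-(((β - m) ⬝ᵥ T *ᵥ (β - m)) + K) / (2 * s))
      = c * Real.exp (-K / (2 * s)) * ((2 * π * s) ^ ((k:ℝ)/2) / Real.sqrt T.det) := by
  have hpt : ∀ β : Fin k → ℝ, c * Real.exp (-(((β - m) ⬝ᵥ T *ᵥ (β - m)) + K) / (2 * s))
      = (c * Real.exp (-K / (2 * s))) * Real.exp (-((β - m) ⬝ᵥ T *ᵥ (β - m)) / (2 * s)) := by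
    intro β
    rw [mul_assoc, ← Real.exp_add]
    congr 2
    field_simp
    ring
  simp_rw [hpt]
  rw [MeasureTheory.integral_const_mul, gauss_full hT hs m]

lemma pipeline {T : Matrix (Fin k) (Fin k) ℝ} (hT : T.PosDef)
    (m : Fin k → ℝ) {K : ℝ} (hK : 0 ≤ K) {g : ℝ} (hg : 0 < g)
    (c0 t w : ℝ) (hsum : t + w + (k:ℝ)/2 = -(g+1))
    (f : (Fin k → ℝ) → ℝ → ℝ)
    (hf : ∀ s, 0 < s → ∀ β, f β s = c0 * (s ^ t * (2*π*s) ^ w *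
        Real.exp (-(((β - m) ⬝ᵥ T *ᵥ (β - m)) + K) / (2 * s)))) :
    ∫ s in Ioi (0:ℝ), ∫ β : Fin k → ℝ, f β s
      = c0 * ((2*π) ^ (w + (k:ℝ)/2) / Real.sqrt T.det) * (Real.Gamma g * (K/2) ^ (-g)) := by
  have hstep : ∀ s ∈ Ioi (0:ℝ), (∫ β : Fin k → ℝ, f β s)
      = (c0 * ((2*π) ^ (w + (k:ℝ)/2) / Real.sqrt T.det)) *
        (s ^ (-(g+1)) * Real.exp (-(K/2) / s)) := by
    intro s hs
    have hs0 : (0:ℝ) < s := hs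
    have h2π : (0:ℝ) < 2*π := by positivity
    simp_rw [hf s hs0]
    have hc : ∀ β : Fin k → ℝ, c0 * (s ^ t * (2*π*s) ^ w *
        Real.exp (-(((β - m) ⬝ᵥ T *ᵥ (β - m)) + K) / (2 * s)))
        = (c0 * (s ^ t * (2*π*s) ^ w)) *
          Real.exp (-(((β - m) ⬝ᵥ T *ᵥ (β - m)) + K) / (2 * s)) := by
      intro β; ring
    simp_rw [hc]
    rw [inner_value hT m hs0 _ K]
    rw [Real.mul_rpow h2π.le hs0.le, Real.mul_rpow h2π.le hs0.le]
    rw [show -(K/2)/s = -K/(2*s) by ring]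
    rw [show -(g+1) = t + w + (k:ℝ)/2 from by rw [hsum]]
    rw [Real.rpow_add hs0 (t+w) ((k:ℝ)/2), Real.rpow_add hs0 t w,
      Real.rpow_add h2π w ((k:ℝ)/2)]
    ring
  rw [setIntegral_congr_fun measurableSet_Ioi hstep, MeasureTheory.integral_const_mul,
    inv_gamma_integral (p := g+1) (by linarith) (by linarith),
    show g + 1 - 1 = g by ring, show (1:ℝ) - (g+1) = -g by ring]

end NPPAux

open NPPAux

set_option maxHeartbeats 4000000 in
/-- Theorem 1(b): marginal posterior density of δ for the normal linear
model under the normalized power prior. -/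
theorem normal_linear_model_npp_marginal_delta
    {n n₀ k : ℕ}
    (X : Matrix (Fin n) (Fin k) ℝ) (X₀ : Matrix (Fin n₀) (Fin k) ℝ)
    (Y : Fin n → ℝ) (Y₀ : Fin n₀ → ℝ)
    (hX : (Xᵀ * X).PosDef) (hX₀ : (X₀ᵀ * X₀).PosDef)
    (R : Matrix (Fin k) (Fin k) ℝ) (hR : R.PosDef)
    (μ₀ : Fin k → ℝ) (a : ℝ) (ha : 0 < a) (b : ℝ) (hb : b = 0 ∨ b = 1)
    (βhat₀ : Fin k → ℝ) (hβhat₀ : βhat₀ = (X₀ᵀ * X₀)⁻¹ *ᵥ (X₀ᵀ *ᵥ Y₀))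
    (βhat : Fin k → ℝ) (hβhat : βhat = (Xᵀ * X)⁻¹ *ᵥ (Xᵀ *ᵥ Y))
    (S₀ : ℝ) (hS₀ : S₀ = (Y₀ - X₀ *ᵥ βhat₀) ⬝ᵥ (Y₀ - X₀ *ᵥ βhat₀))
    (S : ℝ) (hS : S = (Y - X *ᵥ βhat) ⬝ᵥ (Y - X *ᵥ βhat))
    (βstar : ℝ → Fin k → ℝ)
    (hβstar : ∀ δ, βstar δ =
      (b • R + δ • (X₀ᵀ * X₀))⁻¹ *ᵥ (b • (R *ᵥ μ₀) + δ • ((X₀ᵀ * X₀) *ᵥ βhat₀)))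
    (H₀ : ℝ → ℝ)
    (hH₀ : ∀ δ, H₀ δ = (μ₀ - βhat₀) ⬝ᵥ ((X₀ᵀ * X₀) *ᵥ
      ((b • R + δ • (X₀ᵀ * X₀))⁻¹ *ᵥ (R *ᵥ (μ₀ - βhat₀)))))
    (H : ℝ → ℝ)
    (hH : ∀ δ, H δ = (βstar δ - βhat) ⬝ᵥ ((Xᵀ * X) *ᵥ
      ((b • R + δ • (X₀ᵀ * X₀) + Xᵀ * X)⁻¹ *ᵥ
        ((b • R + δ • (X₀ᵀ * X₀)) *ᵥ (βstar δ - βhat)))))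
    (prior : (Fin k → ℝ) → ℝ → ℝ)
    (hprior : ∀ β σ2, prior β σ2 = σ2 ^ (-(a + (k : ℝ) * b / 2)) *
      Real.exp (-(b * ((β - μ₀) ⬝ᵥ (R *ᵥ (β - μ₀)))) / (2 * σ2)))
    (lik lik₀ : (Fin k → ℝ) → ℝ → ℝ)
    (hlik : ∀ β σ2, lik β σ2 = (2 * π * σ2) ^ (-(n : ℝ) / 2) *
      Real.exp (-((Y - X *ᵥ β) ⬝ᵥ (Y - X *ᵥ β)) / (2 * σ2)))
    (hlik₀ : ∀ β σ2, lik₀ β σ2 = (2 * π * σ2) ^ (-(n₀ : ℝ) / 2) *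
      Real.exp (-((Y₀ - X₀ *ᵥ β) ⬝ᵥ (Y₀ - X₀ *ᵥ β)) / (2 * σ2)))
    (pδ : ℝ → ℝ)
    (C : ℝ → ℝ)
    (hC : ∀ δ, C δ = ∫ σ2 in Set.Ioi (0:ℝ), ∫ β : Fin k → ℝ,
      prior β σ2 * lik₀ β σ2 ^ δ)
    (hCpos : ∀ δ ∈ Ioc (0:ℝ) 1, 0 < C δ)
    (hgamma : ∀ δ ∈ Ioc (0:ℝ) 1, 0 < (δ * n₀ + (b - 1) * k) / 2 + a - 1)
    (M : ℝ → ℝ)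
    (hM : ∀ δ, M δ = (δ * (S₀ + b * H₀ δ) + S + H δ) ^ ((n : ℝ) / 2) *
      (1 + (S + H δ) / (δ * (S₀ + b * H₀ δ))) ^ ((δ * n₀ + (b - 1) * k) / 2 + a - 1)) :
    ∃ c : ℝ, 0 < c ∧ ∀ δ ∈ Ioc (0:ℝ) 1,
      (∫ σ2 in Set.Ioi (0:ℝ), ∫ β : Fin k → ℝ,
          pδ δ * prior β σ2 * lik₀ β σ2 ^ δ * lik β σ2 / C δ) =
        c * pδ δ * (b • R + δ • (X₀ᵀ * X₀)).det ^ ((1:ℝ)/2) *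
          Real.Gamma (((n : ℝ) + δ * n₀ + (b - 1) * k) / 2 + a - 1) /
          ((b • R + δ • (X₀ᵀ * X₀) + Xᵀ * X).det ^ ((1:ℝ)/2) *
            Real.Gamma ((δ * n₀ + (b - 1) * k) / 2 + a - 1) * M δ) := by
  classical
  have hRt : Rᵀ = R := posdef_transpose_eq hR.1
  have hG₀t : (X₀ᵀ * X₀)ᵀ = X₀ᵀ * X₀ := posdef_transpose_eq hX₀.1
  have hGt : (Xᵀ * X)ᵀ = Xᵀ * X := posdef_transpose_eq hX.1
  have hG₀u : IsUnit (X₀ᵀ * X₀).det := hX₀.det_pos.ne'.isUnit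
  have hGu : IsUnit (Xᵀ * X).det := hX.det_pos.ne'.isUnit
  have hbnn : (0:ℝ) ≤ b := by rcases hb with rfl | rfl <;> norm_num
  have hbRpsd : (b • R).PosSemidef := possemidef_smul hR.posSemidef hbnn
  have hbRt : (b • R)ᵀ = b • R := by rw [Matrix.transpose_smul, hRt]
  refine ⟨π ^ (-(n:ℝ)/2), by positivity, ?_⟩
  intro δ hδ
  obtain ⟨hδ0, hδ1⟩ := hδ
  have hδG₀pd : (δ • (X₀ᵀ * X₀)).PosDef := posdef_smul hX₀ hδ0
  have hδG₀t : (δ • (X₀ᵀ * X₀))ᵀ = δ • (X₀ᵀ * X₀) := by rw [Matrix.transpose_smul, hG₀t]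
  set A := b • R + δ • (X₀ᵀ * X₀) with hAdef
  have hApd : A.PosDef := Matrix.PosDef.posSemidef_add hbRpsd hδG₀pd
  have hAt : Aᵀ = A := by rw [hAdef, Matrix.transpose_add, hbRt, hδG₀t]
  have hAu : IsUnit A.det := hApd.det_pos.ne'.isUnit
  have hANpd : (A + Xᵀ * X).PosDef := hApd.add_posSemidef hX.posSemidef
  have hANu : IsUnit (A + Xᵀ * X).det := hANpd.det_pos.ne'.isUnit
  set mN := (A + Xᵀ * X)⁻¹ *ᵥ (A *ᵥ βstar δ + (Xᵀ * X) *ᵥ βhat) with hmN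
  -- quadratic identity for the historical part
  have hQC : ∀ β : Fin k → ℝ,
      b * ((β - μ₀) ⬝ᵥ R *ᵥ (β - μ₀)) + δ * ((Y₀ - X₀ *ᵥ β) ⬝ᵥ (Y₀ - X₀ *ᵥ β))
      = (β - βstar δ) ⬝ᵥ A *ᵥ (β - βstar δ) + δ * (S₀ + b * H₀ δ) := by
    intro β
    have hres := resid X₀ hG₀u Y₀ β
    rw [← hβhat₀, ← hS₀] at hres
    have hqc := quad_combine (b • R) (δ • (X₀ᵀ * X₀)) hbRt hδG₀t
      (by rw [← hAdef]; exact hAu) μ₀ βhat₀ β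
    have hMeq : (b • R) *ᵥ μ₀ + (δ • (X₀ᵀ * X₀)) *ᵥ βhat₀
        = b • (R *ᵥ μ₀) + δ • ((X₀ᵀ * X₀) *ᵥ βhat₀) := by
      rw [Matrix.smul_mulVec, Matrix.smul_mulVec]
    rw [← hAdef, hMeq, ← hβstar δ] at hqc
    have hcorr : (μ₀ - βhat₀) ⬝ᵥ (δ • (X₀ᵀ * X₀)) *ᵥ (A⁻¹ *ᵥ ((b • R) *ᵥ (μ₀ - βhat₀)))
        = δ * (b * H₀ δ) := by
      rw [hH₀ δ, ← hAdef]
      simp only [Matrix.smul_mulVec, Matrix.mulVec_smul, dotProduct_smul,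
        smul_eq_mul]
      ring
    have e1 : b * ((β - μ₀) ⬝ᵥ R *ᵥ (β - μ₀)) = (β - μ₀) ⬝ᵥ (b • R) *ᵥ (β - μ₀) := by
      rw [Matrix.smul_mulVec, dotProduct_smul, smul_eq_mul]
    have e2 : δ * ((β - βhat₀) ⬝ᵥ (X₀ᵀ * X₀) *ᵥ (β - βhat₀))
        = (β - βhat₀) ⬝ᵥ (δ • (X₀ᵀ * X₀)) *ᵥ (β - βhat₀) := by
      rw [Matrix.smul_mulVec, dotProduct_smul, smul_eq_mul]
    rw [hres, mul_add, e1, e2]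
    linarith [hqc, hcorr]
  -- quadratic identity for the full model
  have hQN : ∀ β : Fin k → ℝ,
      b * ((β - μ₀) ⬝ᵥ R *ᵥ (β - μ₀)) + δ * ((Y₀ - X₀ *ᵥ β) ⬝ᵥ (Y₀ - X₀ *ᵥ β))
        + (Y - X *ᵥ β) ⬝ᵥ (Y - X *ᵥ β)
      = (β - mN) ⬝ᵥ (A + Xᵀ * X) *ᵥ (β - mN) + (δ * (S₀ + b * H₀ δ) + S + H δ) := by
    intro β
    have h1 := hQC β
    have hres := resid X hGu Y β
    rw [← hβhat, ← hS] at hres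
    have hqc := quad_combine A (Xᵀ * X) hAt hGt hANu (βstar δ) βhat β
    rw [← hmN] at hqc
    have hcorr2 : (βstar δ - βhat) ⬝ᵥ (Xᵀ * X) *ᵥ ((A + Xᵀ * X)⁻¹ *ᵥ (A *ᵥ (βstar δ - βhat)))
        = H δ := (hH δ).symm
    linarith [h1, hres, hqc, hcorr2]
  -- nonnegativity of the constants
  have hKCnn : 0 ≤ δ * (S₀ + b * H₀ δ) := by
    have h := hQC (βstar δ)
    simp only [sub_self, zero_dotProduct, zero_add] at h
    have q1nn : 0 ≤ (βstar δ - μ₀) ⬝ᵥ R *ᵥ (βstar δ - μ₀) := psd_nonneg hR.posSemidef _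
    have q0nn : 0 ≤ (Y₀ - X₀ *ᵥ βstar δ) ⬝ᵥ (Y₀ - X₀ *ᵥ βstar δ) := dot_self_nonneg _
    nlinarith [mul_nonneg hbnn q1nn, mul_nonneg hδ0.le q0nn]
  have hKN_ge : δ * (S₀ + b * H₀ δ) ≤ δ * (S₀ + b * H₀ δ) + S + H δ := by
    have h1 := hQN mN
    simp only [sub_self, zero_dotProduct, zero_add] at h1
    have h2 := hQC mN
    have q1nn : 0 ≤ (mN - βstar δ) ⬝ᵥ A *ᵥ (mN - βstar δ) := psd_nonneg hApd.posSemidef _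
    have q2nn : 0 ≤ (Y - X *ᵥ mN) ⬝ᵥ (Y - X *ᵥ mN) := dot_self_nonneg _
    linarith
  have hKNnn : 0 ≤ δ * (S₀ + b * H₀ δ) + S + H δ := le_trans hKCnn hKN_ge
  -- gamma exponents
  have hgCpos : 0 < (δ * n₀ + (b - 1) * k) / 2 + a - 1 := hgamma δ ⟨hδ0, hδ1⟩
  have hgNpos : 0 < ((n:ℝ) + δ * n₀ + (b - 1) * k) / 2 + a - 1 := by
    have hn : (0:ℝ) ≤ (n:ℝ) := Nat.cast_nonneg n
    linarith
  -- the normalizing constant C δ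
  have hfC : ∀ s, 0 < s → ∀ β : Fin k → ℝ, prior β s * lik₀ β s ^ δ
      = 1 * (s ^ (-(a + (k:ℝ) * b / 2)) * (2*π*s) ^ (-(n₀:ℝ) / 2 * δ) *
        Real.exp (-(((β - βstar δ) ⬝ᵥ A *ᵥ (β - βstar δ)) + δ * (S₀ + b * H₀ δ)) / (2 * s))) := by
    intro s hs β
    have h2πs : (0:ℝ) < 2*π*s := by positivity
    rw [hprior, hlik₀]
    rw [Real.mul_rpow (by positivity) (Real.exp_pos _).le,
      ← Real.rpow_mul h2πs.le, ← Real.exp_mul]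
    have hexp : Real.exp (-(b * ((β - μ₀) ⬝ᵥ R *ᵥ (β - μ₀))) / (2*s)) *
        Real.exp (-((Y₀ - X₀ *ᵥ β) ⬝ᵥ (Y₀ - X₀ *ᵥ β)) / (2*s) * δ)
        = Real.exp (-(((β - βstar δ) ⬝ᵥ A *ᵥ (β - βstar δ)) + δ * (S₀ + b * H₀ δ)) / (2 * s)) := by
      rw [← Real.exp_add, div_mul_eq_mul_div, ← add_div]
      congr 1
      linear_combination (-(1/(2*s))) * hQC β
    linear_combination (s ^ (-(a + (k:ℝ) * b / 2)) * (2*π*s) ^ (-(n₀:ℝ) / 2 * δ)) * hexp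
  have hCint : (∫ σ2 in Ioi (0:ℝ), ∫ β : Fin k → ℝ, prior β σ2 * lik₀ β σ2 ^ δ)
      = 1 * ((2*π) ^ (-(n₀:ℝ) / 2 * δ + (k:ℝ)/2) / Real.sqrt A.det) *
        (Real.Gamma ((δ * n₀ + (b - 1) * k) / 2 + a - 1) *
          ((δ * (S₀ + b * H₀ δ))/2) ^ (-((δ * n₀ + (b - 1) * k) / 2 + a - 1))) :=
    pipeline hApd (βstar δ) hKCnn hgCpos 1 (-(a + (k:ℝ) * b / 2)) (-(n₀:ℝ) / 2 * δ)
      (by push_cast; ring) _ hfC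
  have hCval : C δ = 1 * ((2*π) ^ (-(n₀:ℝ) / 2 * δ + (k:ℝ)/2) / Real.sqrt A.det) *
        (Real.Gamma ((δ * n₀ + (b - 1) * k) / 2 + a - 1) *
          ((δ * (S₀ + b * H₀ δ))/2) ^ (-((δ * n₀ + (b - 1) * k) / 2 + a - 1))) := by
    rw [hC δ]; exact hCint
  -- positivity of K_C
  have hKCpos : 0 < δ * (S₀ + b * H₀ δ) := by
    rcases eq_or_lt_of_le hKCnn with h0 | h; swap
    · exact h
    exfalso
    have hcp := hCpos δ ⟨hδ0, hδ1⟩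
    rw [hCval, ← h0] at hcp
    rw [zero_div, Real.zero_rpow (neg_ne_zero.mpr hgCpos.ne'), mul_zero, mul_zero] at hcp
    exact lt_irrefl 0 hcp
  have hKNpos : 0 < δ * (S₀ + b * H₀ δ) + S + H δ := lt_of_lt_of_le hKCpos hKN_ge
  -- the numerator integral
  have hfN : ∀ s, 0 < s → ∀ β : Fin k → ℝ,
      pδ δ * prior β s * lik₀ β s ^ δ * lik β s / C δ
      = (pδ δ / C δ) * (s ^ (-(a + (k:ℝ) * b / 2)) *
          (2*π*s) ^ (-(n₀:ℝ) / 2 * δ + -(n:ℝ)/2) *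
        Real.exp (-(((β - mN) ⬝ᵥ (A + Xᵀ * X) *ᵥ (β - mN))
          + (δ * (S₀ + b * H₀ δ) + S + H δ)) / (2 * s))) := by
    intro s hs β
    have h2πs : (0:ℝ) < 2*π*s := by positivity
    rw [hprior, hlik₀, hlik]
    rw [Real.mul_rpow (by positivity) (Real.exp_pos _).le,
      ← Real.rpow_mul h2πs.le, ← Real.exp_mul]
    rw [Real.rpow_add h2πs (-(n₀:ℝ) / 2 * δ) (-(n:ℝ)/2)]
    have hexp : Real.exp (-(b * ((β - μ₀) ⬝ᵥ R *ᵥ (β - μ₀))) / (2*s)) *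
        Real.exp (-((Y₀ - X₀ *ᵥ β) ⬝ᵥ (Y₀ - X₀ *ᵥ β)) / (2*s) * δ) *
        Real.exp (-((Y - X *ᵥ β) ⬝ᵥ (Y - X *ᵥ β)) / (2*s))
        = Real.exp (-(((β - mN) ⬝ᵥ (A + Xᵀ * X) *ᵥ (β - mN))
            + (δ * (S₀ + b * H₀ δ) + S + H δ)) / (2 * s)) := by
      rw [← Real.exp_add, ← Real.exp_add, div_mul_eq_mul_div, ← add_div,
        ← add_div]
      congr 1
      linear_combination (-(1/(2*s))) * hQN β
    linear_combination (pδ δ * s ^ (-(a + (k:ℝ) * b / 2)) *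
      (2*π*s) ^ (-(n₀:ℝ) / 2 * δ) * (2*π*s) ^ (-(n:ℝ)/2) / C δ) * hexp
  have hNval : (∫ σ2 in Ioi (0:ℝ), ∫ β : Fin k → ℝ,
        pδ δ * prior β σ2 * lik₀ β σ2 ^ δ * lik β σ2 / C δ)
      = (pδ δ / C δ) * ((2*π) ^ ((-(n₀:ℝ) / 2 * δ + -(n:ℝ)/2) + (k:ℝ)/2) / Real.sqrt (A + Xᵀ * X).det) *
        (Real.Gamma (((n:ℝ) + δ * n₀ + (b - 1) * k) / 2 + a - 1) *
          ((δ * (S₀ + b * H₀ δ) + S + H δ)/2) ^ (-(((n:ℝ) + δ * n₀ + (b - 1) * k) / 2 + a - 1))) :=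
    pipeline hANpd mN hKNnn hgNpos (pδ δ / C δ) (-(a + (k:ℝ) * b / 2))
      (-(n₀:ℝ) / 2 * δ + -(n:ℝ)/2) (by push_cast; ring) _ hfN
  rw [hNval]
  -- final algebraic bookkeeping
  have h2π : (0:ℝ) < 2*π := by positivity
  set KC := δ * (S₀ + b * H₀ δ) with hKC
  set KN := δ * (S₀ + b * H₀ δ) + S + H δ with hKN
  set gC := (δ * (n₀:ℝ) + (b - 1) * k) / 2 + a - 1 with hgC
  set gN := ((n:ℝ) + δ * n₀ + (b - 1) * k) / 2 + a - 1 with hgN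
  have hMval : M δ = KN ^ ((n:ℝ)/2) * (KN ^ gC / KC ^ gC) := by
    rw [hM δ]
    have h1p : 1 + (S + H δ) / KC = KN / KC := by
      rw [hKN, ← hKC]
      field_simp
      ring
    rw [h1p, Real.div_rpow hKNnn hKCnn]
  rw [hCval, hMval]
  have hDA : (0:ℝ) < A.det := hApd.det_pos
  have hDN : (0:ℝ) < (A + Xᵀ * X).det := hANpd.det_pos
  have hsA : Real.sqrt A.det = A.det ^ ((1:ℝ)/2) := Real.sqrt_eq_rpow _
  have hsN : Real.sqrt (A + Xᵀ * X).det = (A + Xᵀ * X).det ^ ((1:ℝ)/2) := Real.sqrt_eq_rpow _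
  rw [show (-(n:ℝ)/2) = -((n:ℝ)/2) by ring]
  simp only [Real.rpow_add h2π, Real.mul_rpow (by norm_num : (0:ℝ) ≤ 2) pi_pos.le]
  rw [Real.rpow_neg (by norm_num : (0:ℝ) ≤ 2) ((n:ℝ)/2)]
  have hKNsplit : (KN/2) ^ (-gN) = 2 ^ gC * 2 ^ ((n:ℝ)/2) / (KN ^ gC * KN ^ ((n:ℝ)/2)) := by
    have h1 : (KN/2) ^ (-gN) = 2 ^ gN / KN ^ gN := by
      rw [Real.div_rpow hKNnn (by norm_num : (0:ℝ) ≤ 2), Real.rpow_neg hKNnn,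
        Real.rpow_neg (by norm_num : (0:ℝ) ≤ 2), div_inv_eq_mul, mul_comm,
        ← div_eq_mul_inv]
    rw [h1, show gN = gC + (n:ℝ)/2 by rw [hgC, hgN]; ring,
      Real.rpow_add (by norm_num : (0:ℝ) < 2), Real.rpow_add hKNpos]
  have hKCsplit : (KC/2) ^ (-gC) = 2 ^ gC / KC ^ gC := by
    rw [Real.div_rpow hKCnn (by norm_num : (0:ℝ) ≤ 2), Real.rpow_neg hKCnn,
      Real.rpow_neg (by norm_num : (0:ℝ) ≤ 2), div_inv_eq_mul, mul_comm,
      ← div_eq_mul_inv]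
  rw [hKNsplit, hKCsplit]
  rw [hsA, hsN]
  have nz1 : (2*π) ^ (-(n₀:ℝ) / 2 * δ + (k:ℝ)/2) ≠ 0 := by positivity
  have nz2 : (2:ℝ) ^ gC ≠ 0 := by positivity
  have nz3 : (2:ℝ) ^ ((n:ℝ)/2) ≠ 0 := by positivity
  have nz4 : π ^ (-(n:ℝ)/2) ≠ 0 := by positivity
  have nz5 : KN ^ gC ≠ 0 := by positivity
  have nz6 : KN ^ ((n:ℝ)/2) ≠ 0 := by positivity
  have nz7 : KC ^ gC ≠ 0 := by positivity
  have nz8 : A.det ^ ((1:ℝ)/2) ≠ 0 := by positivity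
  have nz9 : (A + Xᵀ * X).det ^ ((1:ℝ)/2) ≠ 0 := by positivity
  have nz10 : Real.Gamma gC ≠ 0 := (Real.Gamma_pos_of_pos hgCpos).ne'
  have nz11 : (2:ℝ) ^ (-(n:ℝ)/2) ≠ 0 := by positivity
  field_simp
end

section
/- In the setting of Theorem 3, the quantity h₁(D₀,D,δ) = (n₀/n)∫ log L(θ|D)[π(θ|D₀,D,δ) − π(θ|D₀,δ)]dθ equals (n₀/n)[K(π(·|D₀,D,δ), π(·|D₀,δ)) + K(π(·|D₀,δ), π(·|D₀,D,δ))], hence h₁ ≥ 0 with equality if and only if π(θ|D₀,D,δ) = π(θ|D₀,δ) almost everywhere. -/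
open MeasureTheory Real Set

/-!
Since `p = L q / M`, the log-ratio `log (p / q)` differs from `log L` by the constant `log M`,
which integrates to zero against `p - q` because both densities have mass one. Hence
`∫ log L (p - q) = ∫ (p - q) log (p / q)`, and the latter is the sum of the two Kullback–Leibler
divergences. Its integrand is pointwise nonnegative, as `p - q` and `log (p / q)` have the same
sign, and vanishes exactly where `p = q`.
-/

namespace Real

lemma mul_log_div_add_mul_log_div (a b : ℝ) :
    a * log (a / b) + b * log (b / a) = (a - b) * log (a / b) := by
  rw [← inv_div a b, log_inv]
  ring

lemma sub_mul_log_div_nonneg {a b : ℝ} (ha : 0 < a) (hb : 0 < b) :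
    0 ≤ (a - b) * log (a / b) := by
  rcases le_total a b with h | h
  · exact mul_nonneg_of_nonpos_of_nonpos (sub_nonpos.2 h)
      (log_nonpos (div_pos ha hb).le ((div_le_one hb).2 h))
  · exact mul_nonneg (sub_nonneg.2 h) (log_nonneg ((one_le_div hb).2 h))

lemma sub_mul_log_div_eq_zero_iff {a b : ℝ} (ha : 0 < a) (hb : 0 < b) :
    (a - b) * log (a / b) = 0 ↔ a = b := by
  constructor
  · intro h
    rcases mul_eq_zero.1 h with h | h
    · exact sub_eq_zero.1 h
    · exact (div_eq_one_iff_eq hb.ne').1 (eq_one_of_pos_of_log_eq_zero (div_pos ha hb) h)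
  · rintro rfl
    simp

end Real

section SymmetrizedKL

variable {α : Type*} [MeasurableSpace α] {μ : Measure α} {p q : α → ℝ}

lemma integrable_sub_mul_log_div
    (hpq : Integrable (fun x => p x * log (p x / q x)) μ)
    (hqp : Integrable (fun x => q x * log (q x / p x)) μ) :
    Integrable (fun x => (p x - q x) * log (p x / q x)) μ :=
  (hpq.add hqp).congr (.of_forall fun x => mul_log_div_add_mul_log_div (p x) (q x))

lemma integral_mul_log_div_add_integral_mul_log_div
    (hpq : Integrable (fun x => p x * log (p x / q x)) μ)
    (hqp : Integrable (fun x => q x * log (q x / p x)) μ) :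
    ∫ x, p x * log (p x / q x) ∂μ + ∫ x, q x * log (q x / p x) ∂μ
      = ∫ x, (p x - q x) * log (p x / q x) ∂μ := by
  rw [← integral_add hpq hqp]
  exact integral_congr_ae (.of_forall fun x => mul_log_div_add_mul_log_div (p x) (q x))

lemma integral_sub_mul_log_div_nonneg (hp : ∀ x, 0 < p x) (hq : ∀ x, 0 < q x) :
    0 ≤ ∫ x, (p x - q x) * log (p x / q x) ∂μ :=
  integral_nonneg fun x => sub_mul_log_div_nonneg (hp x) (hq x)

lemma integral_sub_mul_log_div_eq_zero_iff (hp : ∀ x, 0 < p x) (hq : ∀ x, 0 < q x)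
    (hint : Integrable (fun x => (p x - q x) * log (p x / q x)) μ) :
    ∫ x, (p x - q x) * log (p x / q x) ∂μ = 0 ↔ p =ᵐ[μ] q := by
  rw [integral_eq_zero_iff_of_nonneg (fun x => sub_mul_log_div_nonneg (hp x) (hq x)) hint]
  exact Filter.eventually_congr (.of_forall fun x => sub_mul_log_div_eq_zero_iff (hp x) (hq x))

lemma integral_log_mul_sub_eq_integral_sub_mul_log_div {L : α → ℝ} {M : ℝ}
    (hL : ∀ x, 0 < L x) (hq : ∀ x, 0 < q x) (hM : 0 < M) (hratio : ∀ x, p x = L x * q x / M)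
    (hip : Integrable p μ) (hiq : Integrable q μ) (hmass : ∫ x, p x ∂μ = ∫ x, q x ∂μ)
    (hint : Integrable (fun x => (p x - q x) * log (p x / q x)) μ) :
    ∫ x, log (L x) * (p x - q x) ∂μ = ∫ x, (p x - q x) * log (p x / q x) ∂μ := by
  have hlog : ∀ x, log (p x / q x) = log (L x) - log M := fun x => by
    rw [hratio x, mul_div_right_comm, mul_div_cancel_right₀ _ (hq x).ne',
      log_div (hL x).ne' hM.ne']
  have hdiff : Integrable (fun x => log M * (p x - q x)) μ := (hip.sub hiq).const_mul _
  calc ∫ x, log (L x) * (p x - q x) ∂μ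
      = ∫ x, ((p x - q x) * log (p x / q x) + log M * (p x - q x)) ∂μ :=
        integral_congr_ae (.of_forall fun x => by simp only [hlog x]; ring)
    _ = ∫ x, (p x - q x) * log (p x / q x) ∂μ + log M * (∫ x, p x ∂μ - ∫ x, q x ∂μ) := by
        rw [integral_add hint hdiff, integral_const_mul,
          integral_sub hip hiq]
    _ = ∫ x, (p x - q x) * log (p x / q x) ∂μ := by
        rw [hmass, sub_self, mul_zero, add_zero]

end SymmetrizedKL

theorem h1_eq_symmetrized_kl_general {Θ : Type*} [MeasurableSpace Θ] (μ : Measure Θ)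
    (n n₀ : ℝ) (hn : 0 < n) (hn₀ : 0 < n₀)
    (LD p q : Θ → ℝ) (hLD : ∀ θ, 0 < LD θ)
    (hp : ∀ θ, 0 < p θ) (hq : ∀ θ, 0 < q θ)
    (hp1 : ∫ θ, p θ ∂μ = 1) (hq1 : ∫ θ, q θ ∂μ = 1)
    (M : ℝ) (hMpos : 0 < M)
    (hratio : ∀ θ, p θ = LD θ * q θ / M)
    (h₁ : ℝ) (hh₁ : h₁ = (n₀ / n) * ∫ θ, Real.log (LD θ) * (p θ - q θ) ∂μ)
    (Kpq Kqp : ℝ)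
    (hKpq : Kpq = ∫ θ, p θ * Real.log (p θ / q θ) ∂μ)
    (hKqp : Kqp = ∫ θ, q θ * Real.log (q θ / p θ) ∂μ)
    (hintp : Integrable (fun θ => p θ * Real.log (p θ / q θ)) μ)
    (hintq : Integrable (fun θ => q θ * Real.log (q θ / p θ)) μ) :
    h₁ = (n₀ / n) * (Kpq + Kqp) ∧ 0 ≤ h₁ ∧ (h₁ = 0 ↔ p =ᵐ[μ] q) := by
  have hip : Integrable p μ := .of_integral_ne_zero (by rw [hp1]; exact one_ne_zero)
  have hiq : Integrable q μ := .of_integral_ne_zero (by rw [hq1]; exact one_ne_zero)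
  have hint := integrable_sub_mul_log_div hintp hintq
  have hK : Kpq + Kqp = ∫ θ, (p θ - q θ) * log (p θ / q θ) ∂μ := by
    rw [hKpq, hKqp, integral_mul_log_div_add_integral_mul_log_div hintp hintq]
  have heq : h₁ = (n₀ / n) * (Kpq + Kqp) := by
    rw [hh₁, hK, integral_log_mul_sub_eq_integral_sub_mul_log_div hLD hq hMpos hratio hip hiq
      (hp1.trans hq1.symm) hint]
  have hc : 0 < n₀ / n := div_pos hn₀ hn
  refine ⟨heq, ?_, ?_⟩
  · rw [heq, hK]
    exact mul_nonneg hc.le (integral_sub_mul_log_div_nonneg hp hq)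
  · rw [heq, hK, mul_eq_zero, or_iff_right hc.ne', integral_sub_mul_log_div_eq_zero_iff hp hq hint]

/-- h₁(D₀,D,δ) equals (n₀/n) times the symmetrized KL divergence between
the δ-posterior with and without the current data, hence is nonnegative, vanishing iff
the two densities agree a.e. -/
theorem h1_eq_symmetrized_kl {Θ : Type*} [MeasurableSpace Θ] (μ : Measure Θ)
    [SigmaFinite μ] (n n₀ : ℝ) (hn : 0 < n) (hn₀ : 0 < n₀)
    (LD p q : Θ → ℝ) (hLD : ∀ θ, 0 < LD θ)
    (hp : ∀ θ, 0 < p θ) (hq : ∀ θ, 0 < q θ)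
    (hp1 : ∫ θ, p θ ∂μ = 1) (hq1 : ∫ θ, q θ ∂μ = 1)
    (M : ℝ) (hM : M = ∫ θ, LD θ * q θ ∂μ) (hMpos : 0 < M)
    (hratio : ∀ θ, p θ = LD θ * q θ / M)
    (h₁ : ℝ) (hh₁ : h₁ = (n₀ / n) * ∫ θ, Real.log (LD θ) * (p θ - q θ) ∂μ)
    (Kpq Kqp : ℝ)
    (hKpq : Kpq = ∫ θ, p θ * Real.log (p θ / q θ) ∂μ)
    (hKqp : Kqp = ∫ θ, q θ * Real.log (q θ / p θ) ∂μ)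
    (hintp : Integrable (fun θ => p θ * Real.log (p θ / q θ)) μ)
    (hintq : Integrable (fun θ => q θ * Real.log (q θ / p θ)) μ)
    (hint : Integrable (fun θ => Real.log (LD θ) * (p θ - q θ)) μ) :
    h₁ = (n₀ / n) * (Kpq + Kqp) ∧ 0 ≤ h₁ ∧ (h₁ = 0 ↔ p =ᵐ[μ] q) :=
  h1_eq_symmetrized_kl_general μ n n₀ hn hn₀ LD p q hLD hp hq hp1 hq1 M hMpos hratio h₁ hh₁ Kpq Kqp
    hKpq hKqp hintp hintq
end

section
/- (Theorem 4, posterior mode of δ at 0 under the joint power prior) Suppose π₀(δ) is non-increasing on [0,1], the conditional posterior of θ given δ is proper, and M := max_{0≤δ≤1} [∫π₀(θ)f(D|θ)f(D₀|θ)^δ log f(D₀|θ)dθ / ∫π₀(θ)f(D|θ)f(D₀|θ)^δ dθ] < ∞. Then with k₀ = exp(−M/n₀) > 0 and likelihood L(θ|x) = k₀ f(x|θ), the joint-power-prior marginal posterior π(δ|D₀,D) ∝ π₀(δ)∫f(D|θ)[k₀^{n₀}f(D₀|θ)]^δπ₀(θ)dθ is non-increasing in δ, so it has a mode at δ = 0.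 -/
open MeasureTheory Real Set

/-!
Rescaling the likelihood by `k₀` multiplies the integral `F δ` by `k₀ ^ (n₀ δ) = exp (-M δ)`.
Since `F' = G ≤ M F` on `[0, 1]`, the derivative `exp (-M δ) (F' δ - M F δ)` of
`exp (-M δ) F δ` is nonpositive, so this factor is antitone; multiplying it by the
antitone, nonnegative prior `pδ` keeps the product antitone.
-/

lemma AntitoneOn.mul_of_nonneg {α β : Type*} [Mul β] [Zero β] [Preorder β] [Preorder α]
    [PosMulMono β] [MulPosMono β] {f g : α → β} {s : Set α} (hf : AntitoneOn f s)
    (hg : AntitoneOn g s) (hf₀ : ∀ x ∈ s, 0 ≤ f x) (hg₀ : ∀ x ∈ s, 0 ≤ g x) :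
    AntitoneOn (f * g) s :=
  fun _ ha _ hb h ↦ mul_le_mul (hf ha hb h) (hg ha hb h) (hg₀ _ hb) (hf₀ _ ha)

lemma Real.exp_div_rpow_mul (x : ℝ) {c : ℝ} (hc : c ≠ 0) (y : ℝ) :
    exp (x / c) ^ (c * y) = exp (x * y) := by
  rw [← exp_mul]
  congr 1
  field_simp

lemma antitoneOn_exp_neg_mul_mul_of_deriv_le {s : Set ℝ} (hs : Convex ℝ s) {F F' : ℝ → ℝ}
    {M : ℝ} (hF : ∀ x ∈ s, HasDerivAt F (F' x) x) (hF'_le : ∀ x ∈ s, F' x ≤ M * F x) :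
    AntitoneOn (fun x ↦ exp (-M * x) * F x) s := by
  have hderiv : ∀ x ∈ s,
      HasDerivAt (fun x ↦ exp (-M * x) * F x) (exp (-M * x) * (F' x - M * F x)) x := by
    intro x hx
    have hexp : HasDerivAt (fun x ↦ exp (-M * x)) (exp (-M * x) * -M) x := by
      simpa using ((hasDerivAt_id x).const_mul (-M)).exp
    exact (hexp.mul (hF x hx)).congr_deriv (by ring)
  refine antitoneOn_of_hasDerivWithinAt_nonpos hs
    (fun x hx ↦ (hderiv x hx).continuousAt.continuousWithinAt)
    (fun x hx ↦ (hderiv x (interior_subset hx)).hasDerivWithinAt) fun x hx ↦ ?_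
  have hx := interior_subset hx
  exact mul_nonpos_of_nonneg_of_nonpos (exp_pos _).le (sub_nonpos.mpr (hF'_le x hx))

theorem jpp_posterior_mode_delta_zero_general {Θ : Type*} [MeasurableSpace Θ] (μ : Measure Θ)
    (n₀ : ℕ) (hn₀ : 0 < n₀)
    (fD fD₀ π₀ : Θ → ℝ)
    (pδ : ℝ → ℝ) (hpδ0 : ∀ δ ∈ Icc (0:ℝ) 1, 0 ≤ pδ δ)
    (hpδanti : AntitoneOn pδ (Icc 0 1))
    (F G : ℝ → ℝ)
    (hFpos : ∀ δ ∈ Icc (0:ℝ) 1, 0 < F δ)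
    (hDUI : ∀ δ ∈ Icc (0:ℝ) 1, HasDerivAt F (G δ) δ)
    (M : ℝ) (hM : ∀ δ ∈ Icc (0:ℝ) 1, G δ / F δ ≤ M)
    (k₀ : ℝ) (hk₀ : k₀ = Real.exp (-M / n₀))
    (m : ℝ → ℝ)
    (hm : ∀ δ, m δ = pδ δ * ∫ θ, fD θ * (k₀ ^ (n₀ : ℝ) * fD₀ θ) ^ δ * π₀ θ ∂μ)
    (hmF : ∀ δ, (∫ θ, fD θ * (k₀ ^ (n₀ : ℝ) * fD₀ θ) ^ δ * π₀ θ ∂μ) =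
      k₀ ^ ((n₀ : ℝ) * δ) * F δ) :
    0 < k₀ ∧ AntitoneOn m (Icc 0 1) ∧ ∀ δ ∈ Icc (0:ℝ) 1, m δ ≤ m 0 := by
  have hm_eq : m = pδ * fun δ ↦ exp (-M * δ) * F δ := by
    funext δ
    rw [hm, hmF, hk₀, exp_div_rpow_mul _ (Nat.cast_ne_zero.mpr hn₀.ne'), Pi.mul_apply]
  have hG_le : ∀ δ ∈ Icc (0:ℝ) 1, G δ ≤ M * F δ := fun δ hδ ↦
    (div_le_iff₀ (hFpos δ hδ)).mp (hM δ hδ)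
  have hanti : AntitoneOn m (Icc 0 1) := by
    rw [hm_eq]
    exact hpδanti.mul_of_nonneg
      (antitoneOn_exp_neg_mul_mul_of_deriv_le (convex_Icc 0 1) hDUI hG_le) hpδ0
      fun δ hδ ↦ (mul_pos (exp_pos _) (hFpos δ hδ)).le
  exact ⟨hk₀ ▸ exp_pos _, hanti, fun δ hδ ↦ hanti (left_mem_Icc.mpr zero_le_one) hδ hδ.1⟩

/-- Theorem 4: under the joint power prior with likelihood rescaled by the
constant k₀ = exp(−M/n₀), the marginal posterior of δ is non-increasing on [0,1], hence
has a mode at δ = 0. -/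
theorem jpp_posterior_mode_delta_zero {Θ : Type*} [MeasurableSpace Θ] (μ : Measure Θ)
    (n n₀ : ℕ) (hn : 0 < n) (hn₀ : 0 < n₀)
    (fD fD₀ π₀ : Θ → ℝ) (hfD₀ : ∀ θ, 0 < fD₀ θ)
    (hπ₀ : ∀ θ, 0 ≤ π₀ θ) (hπ₀1 : ∫ θ, π₀ θ ∂μ = 1)
    (pδ : ℝ → ℝ) (hpδ0 : ∀ δ ∈ Icc (0:ℝ) 1, 0 ≤ pδ δ)
    (hpδanti : AntitoneOn pδ (Icc 0 1))
    (F G : ℝ → ℝ)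
    (hF : ∀ δ, F δ = ∫ θ, π₀ θ * fD θ * fD₀ θ ^ δ ∂μ)
    (hG : ∀ δ, G δ = ∫ θ, π₀ θ * fD θ * fD₀ θ ^ δ * Real.log (fD₀ θ) ∂μ)
    (hFpos : ∀ δ ∈ Icc (0:ℝ) 1, 0 < F δ)
    (hDUI : ∀ δ ∈ Icc (0:ℝ) 1, HasDerivAt F (G δ) δ)
    (M : ℝ) (hM : ∀ δ ∈ Icc (0:ℝ) 1, G δ / F δ ≤ M)
    (k₀ : ℝ) (hk₀ : k₀ = Real.exp (-M / n₀))
    (m : ℝ → ℝ)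
    (hm : ∀ δ, m δ = pδ δ * ∫ θ, fD θ * (k₀ ^ (n₀ : ℝ) * fD₀ θ) ^ δ * π₀ θ ∂μ)
    (hmF : ∀ δ, (∫ θ, fD θ * (k₀ ^ (n₀ : ℝ) * fD₀ θ) ^ δ * π₀ θ ∂μ) =
      k₀ ^ ((n₀ : ℝ) * δ) * F δ) :
    0 < k₀ ∧ AntitoneOn m (Icc 0 1) ∧ ∀ δ ∈ Icc (0:ℝ) 1, m δ ≤ m 0 :=
  jpp_posterior_mode_delta_zero_general μ n₀ hn₀ fD fD₀ π₀ pδ hpδ0 hpδanti F G hFpos hDUI M hM k₀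
    hk₀ m hm hmF
end

section
/- Under the joint power prior for Bernoulli data, multiplying the historical likelihood by the binomial coefficient c₁ = C(n₀,y₀) changes the marginal posterior of δ from π_{J1}(δ|D₀,D) ∝ π₀(δ)B(δy₀+y+α, δ(n₀−y₀)+n−y+β) to π_{J2}(δ|D₀,D) ∝ c₁^δ π_{J1}(δ|D₀,D); in particular, unless c₁ = 1, the two (normalized) marginal posteriors of δ are different functions whenever π_{J1} is not a point mass. -/
open MeasureTheory Real Set

lemma aux_one_lt_choose {y₀ n₀ : ℕ} (h1 : 0 < y₀) (h2 : y₀ < n₀) :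
    1 < n₀.choose y₀ := by
  obtain ⟨j, rfl⟩ : ∃ j, y₀ = j + 1 := ⟨y₀ - 1, by omega⟩
  obtain ⟨m, rfl⟩ : ∃ m, n₀ = m + 1 := ⟨n₀ - 1, by omega⟩
  rw [Nat.choose_succ_succ]
  simp only [Nat.succ_eq_add_one]
  have := Nat.choose_pos (show j ≤ m by omega)
  have := Nat.choose_pos (show j + 1 ≤ m by omega)
  omega

lemma aux_gamma_cont {s : Set ℝ} {a : ℝ → ℝ} (ha : ContinuousOn a s)
    (hpos : ∀ x ∈ s, 0 < a x) :
    ContinuousOn (fun x => Real.Gamma (a x)) s := by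
  intro x hx
  have h : ContinuousAt Real.Gamma (a x) := by
    refine (Real.differentiableAt_Gamma fun m => ?_).continuousAt
    intro h
    have h0 : -((m : ℕ) : ℝ) ≤ 0 := by simp [Nat.cast_nonneg]
    linarith [hpos x hx, h ▸ h0]
  exact h.comp_continuousWithinAt (ha x hx)

/-- under the joint power prior for Bernoulli data, multiplying the
historical likelihood by the binomial coefficient c₁ multiplies the marginal posterior
kernel of δ by c₁^δ, and the resulting normalized marginal posteriors of δ differ. -/
theorem jpp_bernoulli_likelihood_constant_matters (y₀ n₀ y n : ℕ)
    (h1 : 0 < y₀) (h2 : y₀ < n₀) (h3 : y ≤ n)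
    (α β : ℝ) (hα : 0 < α) (hβ : 0 < β)
    (pδ : ℝ → ℝ) (hpδc : ContinuousOn pδ (Icc 0 1))
    (hpδpos : ∀ δ ∈ Icc (0:ℝ) 1, 0 < pδ δ)
    (c₁ : ℝ) (hc₁ : c₁ = (n₀.choose y₀ : ℝ))
    (Betaf : ℝ → ℝ → ℝ)
    (hB : ∀ s t, Betaf s t = Real.Gamma s * Real.Gamma t / Real.Gamma (s + t))
    (f₁ f₂ : ℝ → ℝ)
    (hf₁ : ∀ δ, f₁ δ = pδ δ *
      Betaf (δ * y₀ + y + α) (δ * ((n₀ : ℝ) - y₀) + ((n : ℝ) - y) + β))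
    (hf₂ : ∀ δ, f₂ δ = c₁ ^ δ * f₁ δ) :
    1 < c₁ ∧
    (∀ δ ∈ Icc (0:ℝ) 1,
      (∫ p in (0:ℝ)..1, pδ δ * (c₁ * (p ^ (y₀ : ℝ) * (1 - p) ^ ((n₀ : ℝ) - y₀))) ^ δ *
          (p ^ (α - 1) * (1 - p) ^ (β - 1)) * (p ^ (y : ℝ) * (1 - p) ^ ((n : ℝ) - y))) =
        c₁ ^ δ *
          ∫ p in (0:ℝ)..1, pδ δ * (p ^ (y₀ : ℝ) * (1 - p) ^ ((n₀ : ℝ) - y₀)) ^ δ *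
            (p ^ (α - 1) * (1 - p) ^ (β - 1)) * (p ^ (y : ℝ) * (1 - p) ^ ((n : ℝ) - y))) ∧
    ¬ (∀ δ ∈ Icc (0:ℝ) 1,
        f₁ δ / (∫ t in (0:ℝ)..1, f₁ t) = f₂ δ / (∫ t in (0:ℝ)..1, f₂ t)) := by
  have hc : 1 < c₁ := by
    rw [hc₁]
    exact_mod_cast aux_one_lt_choose h1 h2
  have hc0 : 0 < c₁ := lt_trans one_pos hc
  refine ⟨hc, ?_, ?_⟩
  · -- pointwise kernel identity
    intro δ hδ
    rw [show (∫ p in (0:ℝ)..1, pδ δ *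
          (c₁ * (p ^ (y₀ : ℝ) * (1 - p) ^ ((n₀ : ℝ) - y₀))) ^ δ *
          (p ^ (α - 1) * (1 - p) ^ (β - 1)) * (p ^ (y : ℝ) * (1 - p) ^ ((n : ℝ) - y))) =
        ∫ p in (0:ℝ)..1, c₁ ^ δ *
          (pδ δ * (p ^ (y₀ : ℝ) * (1 - p) ^ ((n₀ : ℝ) - y₀)) ^ δ *
          (p ^ (α - 1) * (1 - p) ^ (β - 1)) * (p ^ (y : ℝ) * (1 - p) ^ ((n : ℝ) - y)))
        from ?_, intervalIntegral.integral_const_mul]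
    apply intervalIntegral.integral_congr
    intro p hp
    rw [Set.uIcc_of_le (by norm_num : (0:ℝ) ≤ 1)] at hp
    have hp0 : 0 ≤ p := hp.1
    have hp1 : 0 ≤ 1 - p := by linarith [hp.2]
    have hA : 0 ≤ p ^ (y₀ : ℝ) * (1 - p) ^ ((n₀ : ℝ) - y₀) :=
      mul_nonneg (Real.rpow_nonneg hp0 _) (Real.rpow_nonneg hp1 _)
    simp only
    rw [Real.mul_rpow hc0.le hA]
    ring
  · -- the normalized posteriors differ
    set a : ℝ → ℝ := fun δ => δ * y₀ + y + α with ha_def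
    set b : ℝ → ℝ := fun δ => δ * ((n₀ : ℝ) - y₀) + ((n : ℝ) - y) + β with hb_def
    have hy₀0 : (0:ℝ) ≤ (y₀ : ℝ) := Nat.cast_nonneg _
    have hn₀y₀ : (0:ℝ) ≤ (n₀ : ℝ) - y₀ := by
      have : (y₀:ℝ) ≤ n₀ := Nat.cast_le.mpr h2.le
      linarith
    have hny : (0:ℝ) ≤ (n : ℝ) - y := by
      have : (y:ℝ) ≤ n := Nat.cast_le.mpr h3
      linarith
    have hapos : ∀ δ ∈ Icc (0:ℝ) 1, 0 < a δ := by
      intro δ hδ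
      have h1 : 0 ≤ δ * y₀ := mul_nonneg hδ.1 hy₀0
      have h2 : (0:ℝ) ≤ (y:ℝ) := Nat.cast_nonneg _
      simp only [ha_def]
      linarith
    have hbpos : ∀ δ ∈ Icc (0:ℝ) 1, 0 < b δ := by
      intro δ hδ
      have h1 : 0 ≤ δ * ((n₀:ℝ) - y₀) := mul_nonneg hδ.1 hn₀y₀
      simp only [hb_def]
      linarith
    have hacont : ContinuousOn a (Icc 0 1) := by fun_prop
    have hbcont : ContinuousOn b (Icc 0 1) := by fun_prop
    have hf₁eq : ∀ δ, f₁ δ = pδ δ *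
        (Real.Gamma (a δ) * Real.Gamma (b δ) / Real.Gamma (a δ + b δ)) := by
      intro δ; rw [hf₁, hB]
    have hf₁pos : ∀ δ ∈ Icc (0:ℝ) 1, 0 < f₁ δ := by
      intro δ hδ
      rw [hf₁eq]
      exact mul_pos (hpδpos δ hδ)
        (div_pos (mul_pos (Real.Gamma_pos_of_pos (hapos δ hδ))
          (Real.Gamma_pos_of_pos (hbpos δ hδ)))
          (Real.Gamma_pos_of_pos (by linarith [hapos δ hδ, hbpos δ hδ])))
    have hf₁cont : ContinuousOn f₁ (Icc 0 1) := by
      apply ContinuousOn.congr (f := fun δ => pδ δ *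
          (Real.Gamma (a δ) * Real.Gamma (b δ) / Real.Gamma (a δ + b δ)))
        _ (fun δ _ => hf₁eq δ)
      refine hpδc.mul (ContinuousOn.div
        ((aux_gamma_cont hacont hapos).mul (aux_gamma_cont hbcont hbpos))
        (aux_gamma_cont (by fun_prop) (fun δ hδ => by linarith [hapos δ hδ, hbpos δ hδ]))
        (fun δ hδ => (Real.Gamma_pos_of_pos (by linarith [hapos δ hδ, hbpos δ hδ])).ne'))
    have hf₂pos : ∀ δ ∈ Icc (0:ℝ) 1, 0 < f₂ δ := by
      intro δ hδ
      rw [hf₂]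
      exact mul_pos (Real.rpow_pos_of_pos hc0 δ) (hf₁pos δ hδ)
    have hf₂cont : ContinuousOn f₂ (Icc 0 1) := by
      apply ContinuousOn.congr (f := fun δ => Real.exp (Real.log c₁ * δ) * f₁ δ)
        _ (fun δ _ => by rw [hf₂, Real.rpow_def_of_pos hc0])
      exact (Continuous.continuousOn (by fun_prop)).mul hf₁cont
    have hInt₁ : IntervalIntegrable f₁ volume 0 1 := by
      apply ContinuousOn.intervalIntegrable
      rwa [Set.uIcc_of_le (by norm_num : (0:ℝ) ≤ 1)]
    have hInt₂ : IntervalIntegrable f₂ volume 0 1 := by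
      apply ContinuousOn.intervalIntegrable
      rwa [Set.uIcc_of_le (by norm_num : (0:ℝ) ≤ 1)]
    have hI₁ : 0 < ∫ t in (0:ℝ)..1, f₁ t :=
      intervalIntegral.intervalIntegral_pos_of_pos_on hInt₁
        (fun x hx => hf₁pos x ⟨hx.1.le, hx.2.le⟩) one_pos
    have hI₂ : 0 < ∫ t in (0:ℝ)..1, f₂ t :=
      intervalIntegral.intervalIntegral_pos_of_pos_on hInt₂
        (fun x hx => hf₂pos x ⟨hx.1.le, hx.2.le⟩) one_pos
    intro hall
    have h0 := hall 0 ⟨le_refl 0, zero_le_one⟩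
    have h1' := hall 1 ⟨zero_le_one, le_refl 1⟩
    rw [hf₂ 0, Real.rpow_zero, one_mul] at h0
    rw [hf₂ 1, Real.rpow_one] at h1'
    set I₁ := ∫ t in (0:ℝ)..1, f₁ t
    set I₂ := ∫ t in (0:ℝ)..1, f₂ t
    have e0 : f₁ 0 * I₂ = f₁ 0 * I₁ := (div_eq_div_iff hI₁.ne' hI₂.ne').mp h0
    have hIeq : I₂ = I₁ := mul_left_cancel₀ (hf₁pos 0 ⟨le_refl 0, zero_le_one⟩).ne' e0
    have e1 : f₁ 1 * I₂ = c₁ * f₁ 1 * I₁ := (div_eq_div_iff hI₁.ne' hI₂.ne').mp h1'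
    rw [hIeq] at e1
    have ht : 0 < f₁ 1 * I₁ := mul_pos (hf₁pos 1 ⟨zero_le_one, le_refl 1⟩) hI₁
    nlinarith [ht, hc]
end

section
/- If the normalized power prior π(θ,δ|D₀) = π₀(δ)·L(θ|D₀)^δπ₀(θ)/C(δ) with C(δ) = ∫L(θ|D₀)^δπ₀(θ)dθ is used, then the marginal prior of δ obtained by integrating θ out equals the initial prior π₀(δ); whereas under the joint power prior π(θ,δ|D₀) ∝ L(θ|D₀)^δπ₀(θ)π₀(δ), the marginal of δ is proportional to π₀(δ)C(δ), which differs from π₀(δ) unless C(δ) is constant in δ. -/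
/-!
Integrating θ out of the normalized power prior leaves `π₀(δ) · C(δ) / C(δ) = π₀(δ)`.
Under the joint power prior the marginal is `π₀(δ) C(δ) / ∫ π₀ C`; since `π₀(δ) > 0` it equals
`π₀(δ)` exactly when `C(δ)` equals the number `∫ π₀ C`, and conversely a constant `C ≡ c` gives
`∫ π₀ C = c ∫ π₀ = c`.
-/

open MeasureTheory Real Set

theorem integral_const_mul_div_integral {Θ : Type*} [MeasurableSpace Θ] {μ : Measure Θ}
    {f : Θ → ℝ} (hf : ∫ θ, f θ ∂μ ≠ 0) (a : ℝ) :
    ∫ θ, a * (f θ / ∫ θ, f θ ∂μ) ∂μ = a := by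
  rw [integral_const_mul, integral_div, div_self hf, mul_one]

theorem intervalIntegral.integral_mul_of_eqOn_const {a b c : ℝ} {p g : ℝ → ℝ}
    (hg : EqOn g (fun _ => c) (uIcc a b)) :
    ∫ t in a..b, p t * g t = (∫ t in a..b, p t) * c := by
  rw [← intervalIntegral.integral_mul_const]
  exact intervalIntegral.integral_congr fun t ht => by rw [hg ht]

theorem mul_div_integral_mul_eq_self_iff {a b : ℝ} (hab : a ≤ b) {p g : ℝ → ℝ}
    (hp : ∀ t ∈ Icc a b, p t ≠ 0) (hp1 : ∫ t in a..b, p t = 1)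
    (hg : ∀ t ∈ Icc a b, g t ≠ 0) :
    (∀ t ∈ Icc a b, p t * g t / (∫ s in a..b, p s * g s) = p t) ↔
      ∃ c : ℝ, ∀ t ∈ Icc a b, g t = c := by
  constructor
  · intro h
    refine ⟨∫ s in a..b, p s * g s, fun t ht => ?_⟩
    have hpt := h t ht
    have hI : ∫ s in a..b, p s * g s ≠ 0 := by
      intro hI
      rw [hI, div_zero] at hpt
      exact hp t ht hpt.symm
    rwa [div_eq_iff hI, mul_right_inj' (hp t ht)] at hpt
  · rintro ⟨c, hc⟩ t ht
    have hI : ∫ s in a..b, p s * g s = c := by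
      rw [intervalIntegral.integral_mul_of_eqOn_const fun s hs => hc s (uIcc_of_le hab ▸ hs),
        hp1, one_mul]
    rw [hI, ← hc t ht, mul_div_cancel_right₀ _ (hg t ht)]

theorem npp_preserves_delta_prior_general {Θ : Type*} [MeasurableSpace Θ] (μ : Measure Θ)
    (L π₀ : Θ → ℝ)
    (pδ : ℝ → ℝ) (hpδpos : ∀ δ ∈ Icc (0:ℝ) 1, 0 < pδ δ)
    (hpδ1 : ∫ t in (0:ℝ)..1, pδ t = 1)
    (C : ℝ → ℝ) (hC : ∀ δ, C δ = ∫ θ, L θ ^ δ * π₀ θ ∂μ)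
    (hCpos : ∀ δ ∈ Icc (0:ℝ) 1, 0 < C δ) :
    (∀ δ ∈ Icc (0:ℝ) 1, ∫ θ, pδ δ * (L θ ^ δ * π₀ θ / C δ) ∂μ = pδ δ) ∧
    ((∀ δ ∈ Icc (0:ℝ) 1,
        pδ δ * C δ / (∫ t in (0:ℝ)..1, pδ t * C t) = pδ δ) ↔
      ∃ c : ℝ, ∀ δ ∈ Icc (0:ℝ) 1, C δ = c) := by
  refine ⟨fun δ hδ => ?_, mul_div_integral_mul_eq_self_iff zero_le_one
    (fun δ hδ => (hpδpos δ hδ).ne') hpδ1 (fun δ hδ => (hCpos δ hδ).ne')⟩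
  have hCδ := hCpos δ hδ
  rw [hC δ] at hCδ ⊢
  exact integral_const_mul_div_integral hCδ.ne' _

/-- the normalized power prior leaves the marginal prior of δ equal to the
initial prior π₀(δ), while the joint power prior yields a marginal proportional to
π₀(δ)C(δ), which coincides with π₀(δ) exactly when C is constant on [0,1]. -/
theorem npp_preserves_delta_prior {Θ : Type*} [MeasurableSpace Θ] (μ : Measure Θ)
    (L π₀ : Θ → ℝ) (hL : ∀ θ, 0 < L θ) (hπ₀ : ∀ θ, 0 ≤ π₀ θ)
    (hπ₀1 : ∫ θ, π₀ θ ∂μ = 1)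
    (pδ : ℝ → ℝ) (hpδpos : ∀ δ ∈ Icc (0:ℝ) 1, 0 < pδ δ)
    (hpδ1 : ∫ t in (0:ℝ)..1, pδ t = 1)
    (hpδint : IntervalIntegrable pδ volume 0 1)
    (C : ℝ → ℝ) (hC : ∀ δ, C δ = ∫ θ, L θ ^ δ * π₀ θ ∂μ)
    (hCpos : ∀ δ ∈ Icc (0:ℝ) 1, 0 < C δ)
    (hfin : ∀ δ ∈ Icc (0:ℝ) 1, Integrable (fun θ => L θ ^ δ * π₀ θ) μ)
    (hCint : IntervalIntegrable (fun t => pδ t * C t) volume 0 1) :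
    (∀ δ ∈ Icc (0:ℝ) 1, ∫ θ, pδ δ * (L θ ^ δ * π₀ θ / C δ) ∂μ = pδ δ) ∧
    ((∀ δ ∈ Icc (0:ℝ) 1,
        pδ δ * C δ / (∫ t in (0:ℝ)..1, pδ t * C t) = pδ δ) ↔
      ∃ c : ℝ, ∀ δ ∈ Icc (0:ℝ) 1, C δ = c) :=
  npp_preserves_delta_prior_general μ L π₀ pδ hpδpos hpδ1 C hC hCpos
end
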